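/- arXiv:2202.03951 — 11 statements merged into one kernel-verified Lean document; each statement's English description precedes it below -/
import Mathlib

section
/- Non-negativity of negative-order Sibson mutual information: for α < 0, I_α(X,Y) := (α/(1-α)) · log Σ_y (Σ_x p_{Y|X=x}(y)^α p_X(x))^{1/α} ≥ 0. -/
open Real Finset

lemma convexOn_rpow_neg {α : ℝ} (hα : α < 0) :
    ConvexOn ℝ (Set.Ioi (0 : ℝ)) fun x : ℝ => x ^ α := by
  apply convexOn_of_hasDerivWithinAt2_nonneg (convex_Ioi 0)
    (f' := fun x => α * x ^ (α - 1)) (f'' := fun x => α * ((α - 1) * x ^ (α - 1 - 1)))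
  · intro x hx
    exact (Real.continuousAt_rpow_const x α (Or.inl (ne_of_gt hx))).continuousWithinAt
  · intro x hx
    rw [interior_Ioi] at hx
    exact (Real.hasDerivAt_rpow_const (Or.inl (ne_of_gt hx))).hasDerivWithinAt
  · intro x hx
    rw [interior_Ioi] at hx
    exact ((Real.hasDerivAt_rpow_const (p := α - 1)
      (Or.inl (ne_of_gt hx))).const_mul α).hasDerivWithinAt
  · intro x hx
    rw [interior_Ioi] at hx
    have h1 : (0:ℝ) < α * (α - 1) := mul_pos_of_neg_of_neg hα (by linarith)
    have h2 : (0:ℝ) < x ^ (α - 1 - 1) := Real.rpow_pos_of_pos hx _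
    nlinarith

/-- Non-negativity of negative-order Sibson mutual information: for `α < 0`,
`I_α(X,Y) = (α/(1-α)) · log Σ_y (Σ_x p_{Y|X=x}(y)^α p_X(x))^{1/α} ≥ 0`. -/
theorem sibson_neg_order_nonneg
    {X Y : Type*} [Fintype X] [Fintype Y]
    (p : X × Y → ℝ) (hp : ∀ z, 0 < p z) (hp1 : ∑ z, p z = 1)
    (pX : X → ℝ) (hpX : ∀ x, pX x = ∑ y, p (x, y))
    (α : ℝ) (hα : α < 0) :
    0 ≤ (α / (1 - α)) *
        Real.log (∑ y, (∑ x, (p (x, y) / pX x) ^ α * pX x) ^ (1 / α)) := by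
  haveI hne : Nonempty (X × Y) := by
    rcases isEmpty_or_nonempty (X × Y) with h | h
    · simp at hp1
    · exact h
  haveI : Nonempty X := ⟨hne.some.1⟩
  haveI : Nonempty Y := ⟨hne.some.2⟩
  have hpXpos : ∀ x, 0 < pX x := fun x => by
    rw [hpX x]; exact Finset.sum_pos (fun y _ => hp _) univ_nonempty
  have hpXsum : ∑ x, pX x = 1 := by
    rw [← hp1, Fintype.sum_prod_type]
    exact Finset.sum_congr rfl fun x _ => hpX x
  -- Jensen: for each y, the inner sum ≥ (∑ₓ p(x,y))^α
  set pY : Y → ℝ := fun y => ∑ x, p (x, y) with hpY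
  have hpYpos : ∀ y, 0 < pY y := fun y => Finset.sum_pos (fun x _ => hp _) univ_nonempty
  have key : ∀ y, (pY y) ^ α ≤ ∑ x, (p (x, y) / pX x) ^ α * pX x := by
    intro y
    have h := (convexOn_rpow_neg hα).map_sum_le (t := univ)
      (w := fun x => pX x) (p := fun x => p (x, y) / pX x)
      (fun x _ => (hpXpos x).le) hpXsum
      (fun x _ => Set.mem_Ioi.2 (div_pos (hp _) (hpXpos x)))
    simp only [smul_eq_mul] at h
    have hsum : ∑ x, pX x * (p (x, y) / pX x) = pY y := by
      refine Finset.sum_congr rfl fun x _ => ?_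
      rw [mul_div_assoc']
      exact mul_div_cancel_left₀ _ (hpXpos x).ne'
    rw [hsum] at h
    calc (pY y) ^ α ≤ ∑ x, pX x * (p (x, y) / pX x) ^ α := h
      _ = ∑ x, (p (x, y) / pX x) ^ α * pX x := by
          exact Finset.sum_congr rfl fun x _ => mul_comm _ _
  -- hence each term ^(1/α) ≤ pY y (rpow is antitone for negative exponent)
  have term_le : ∀ y, (∑ x, (p (x, y) / pX x) ^ α * pX x) ^ (1 / α) ≤ pY y := by
    intro y
    have h1 : ((pY y) ^ α) ^ (1 / α) = pY y := by
      rw [← Real.rpow_mul (hpYpos y).le, mul_one_div_cancel (ne_of_lt hα), Real.rpow_one]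
    calc (∑ x, (p (x, y) / pX x) ^ α * pX x) ^ (1 / α)
        ≤ ((pY y) ^ α) ^ (1 / α) := by
          exact Real.rpow_le_rpow_of_nonpos (Real.rpow_pos_of_pos (hpYpos y) α) (key y)
            (one_div_nonpos.mpr hα.le)
      _ = pY y := h1
  have hS_le : (∑ y, (∑ x, (p (x, y) / pX x) ^ α * pX x) ^ (1 / α)) ≤ 1 := by
    calc (∑ y, (∑ x, (p (x, y) / pX x) ^ α * pX x) ^ (1 / α))
        ≤ ∑ y, pY y := Finset.sum_le_sum fun y _ => term_le y
      _ = 1 := by rw [← hp1, Fintype.sum_prod_type_right]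
  have hS_pos : 0 < ∑ y, (∑ x, (p (x, y) / pX x) ^ α * pX x) ^ (1 / α) := by
    apply Finset.sum_pos _ univ_nonempty
    intro y _
    apply Real.rpow_pos_of_pos
    exact Finset.sum_pos (fun x _ => mul_pos (Real.rpow_pos_of_pos
      (div_pos (hp _) (hpXpos x)) α) (hpXpos x)) univ_nonempty
  have hlog : Real.log (∑ y, (∑ x, (p (x, y) / pX x) ^ α * pX x) ^ (1 / α)) ≤ 0 :=
    Real.log_nonpos hS_pos.le hS_le
  have hcoef : α / (1 - α) ≤ 0 :=
    div_nonpos_of_nonpos_of_nonneg hα.le (by linarith)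
  nlinarith
end

section
/- Monotonicity of negative-order Sibson mutual information: if α₂ < α₁ < 0, then I_{α₁}(X,Y) ≤ I_{α₂}(X,Y), where I_α(X,Y) = -max_{q_Y} D_α(p_{XY} ‖ p_X ⊗ q_Y). -/
/-!
Write `A_α(y) = ∑ₓ p_X(x) p_{Y|X=x}(y)^α` and `S_α = ∑_y A_α(y)^{1/α}`. For a positive pmf `q`
on `Y`, Jensen's inequality for the convex map `t ↦ t^α` (`α < 0`) gives
`S_α^α ≤ T_α(q) := ∑_y q(y)^{1-α} A_α(y)`, with equality at `q ∝ A_α^{1/α}`; hence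
`I_α = min_q (1 - α)⁻¹ log T_α(q)`. Since `T_α(q) = ∑_{x,y} p (p / (p_X q))^{α-1}`, the quantity
`(1 - α)⁻¹ log T_α(q)` is minus the logarithm of the power mean of order `α - 1` of
`p / (p_X ⊗ q)` under `p`, which is monotone in the order. Evaluating at the minimiser for `α₂`
gives the claim.
-/

open Real Finset

theorem convexOn_rpow_of_nonpos {p : ℝ} (hp : p ≤ 0) :
    ConvexOn ℝ (Set.Ioi 0) fun x : ℝ ↦ x ^ p := by
  have hexp : ConvexOn ℝ Set.univ fun t ↦ exp (p * t) :=
    convexOn_exp.comp_linearMap (LinearMap.lsmul ℝ ℝ p)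
  have himage : log '' Set.Ioi 0 = Set.univ :=
    Set.eq_univ_of_forall fun t ↦ ⟨exp t, exp_pos t, log_exp t⟩
  refine ((himage ▸ hexp).comp_concaveOn strictConcaveOn_log_Ioi.concaveOn
    fun s _ t _ hst ↦ exp_le_exp.2 (mul_le_mul_of_nonpos_left hst hp)).congr fun x hx ↦ ?_
  simp [rpow_def_of_pos (Set.mem_Ioi.1 hx), mul_comm]

section PowerMean

variable {ι : Type*} (s : Finset ι) {w z : ι → ℝ}

theorem rpow_arith_mean_le_arith_mean_rpow_of_nonpos (hw : ∀ i ∈ s, 0 ≤ w i)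
    (hw₁ : ∑ i ∈ s, w i = 1) (hz : ∀ i ∈ s, 0 < z i) {p : ℝ} (hp : p ≤ 0) :
    (∑ i ∈ s, w i * z i) ^ p ≤ ∑ i ∈ s, w i * z i ^ p :=
  (convexOn_rpow_of_nonpos hp).map_sum_le hw hw₁ hz

theorem inv_mul_log_sum_mul_rpow_le_of_lt_of_neg (hw : ∀ i ∈ s, 0 ≤ w i)
    (hw₁ : ∑ i ∈ s, w i = 1) (hz : ∀ i ∈ s, 0 < z i) {p₁ p₂ : ℝ} (h₂₁ : p₂ < p₁)
    (hp₁ : p₁ < 0) :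
    p₂⁻¹ * log (∑ i ∈ s, w i * z i ^ p₂) ≤ p₁⁻¹ * log (∑ i ∈ s, w i * z i ^ p₁) := by
  have hp₂ : p₂ < 0 := h₂₁.trans hp₁
  have hsum_pos : ∀ p : ℝ, 0 < ∑ i ∈ s, w i * z i ^ p := fun p ↦ by
    obtain ⟨j, hj, hwj⟩ := exists_ne_zero_of_sum_ne_zero (hw₁.trans_ne one_ne_zero)
    exact sum_pos' (fun i hi ↦ mul_nonneg (hw i hi) (rpow_nonneg (hz i hi).le _))
      ⟨j, hj, mul_pos ((hw j hj).lt_of_ne' hwj) (rpow_pos_of_pos (hz j hj) _)⟩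
  have hjensen : (∑ i ∈ s, w i * z i ^ p₁) ^ (p₂ / p₁) ≤ ∑ i ∈ s, w i * z i ^ p₂ := by
    convert rpow_arith_mean_le_arith_mean_rpow s w (fun i ↦ z i ^ p₁) hw hw₁
      (fun i hi ↦ (rpow_pos_of_pos (hz i hi) _).le) ((one_le_div_of_neg hp₁).2 h₂₁.le)
      using 2 with i hi
    rw [← rpow_mul (hz i hi).le, mul_div_cancel₀ _ hp₁.ne]
  have hlog := log_le_log (rpow_pos_of_pos (hsum_pos p₁) _) hjensen
  rw [log_rpow (hsum_pos p₁), div_eq_mul_inv, mul_assoc] at hlog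
  have := mul_le_mul_of_nonpos_left hlog (inv_lt_zero.2 hp₂).le
  rwa [← mul_assoc, inv_mul_cancel₀ hp₂.ne, one_mul] at this

end PowerMean

section Variational

variable {ι : Type*} (s : Finset ι) {A q : ι → ℝ} {α : ℝ}

theorem rpow_one_sub_mul_eq_mul_div_rpow {a b : ℝ} (ha : 0 < a) (hb : 0 < b) (hα : α ≠ 0) :
    b ^ (1 - α) * a = b * (a ^ (1 / α) / b) ^ α := by
  rw [div_rpow (rpow_nonneg ha.le _) hb.le, ← rpow_mul ha.le, one_div_mul_cancel hα, rpow_one,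
    rpow_sub hb, rpow_one]
  ring

theorem rpow_sum_rpow_one_div_le_sum_rpow_one_sub_mul (hA : ∀ i ∈ s, 0 < A i)
    (hq : ∀ i ∈ s, 0 < q i) (hq₁ : ∑ i ∈ s, q i = 1) (hα : α < 0) :
    (∑ i ∈ s, A i ^ (1 / α)) ^ α ≤ ∑ i ∈ s, q i ^ (1 - α) * A i := by
  have hmean : ∑ i ∈ s, A i ^ (1 / α) = ∑ i ∈ s, q i * (A i ^ (1 / α) / q i) :=
    sum_congr rfl fun i hi ↦ (mul_div_cancel₀ _ (hq i hi).ne').symm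
  rw [hmean, sum_congr rfl fun i hi ↦ rpow_one_sub_mul_eq_mul_div_rpow (hA i hi) (hq i hi) hα.ne]
  exact rpow_arith_mean_le_arith_mean_rpow_of_nonpos s (fun i hi ↦ (hq i hi).le) hq₁
    (fun i hi ↦ div_pos (rpow_pos_of_pos (hA i hi) _) (hq i hi)) hα.le

theorem sum_rpow_one_sub_mul_eq_rpow_sum_rpow_one_div (hA : ∀ i ∈ s, 0 < A i)
    (hs : s.Nonempty) (hα : α ≠ 0) :
    ∑ i ∈ s, (A i ^ (1 / α) / ∑ j ∈ s, A j ^ (1 / α)) ^ (1 - α) * A i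
      = (∑ j ∈ s, A j ^ (1 / α)) ^ α := by
  set S := ∑ j ∈ s, A j ^ (1 / α)
  have hS : 0 < S := sum_pos (fun i hi ↦ rpow_pos_of_pos (hA i hi) _) hs
  calc ∑ i ∈ s, (A i ^ (1 / α) / S) ^ (1 - α) * A i
      = ∑ i ∈ s, A i ^ (1 / α) / S * S ^ α := sum_congr rfl fun i hi ↦ by
        have hb := rpow_pos_of_pos (hA i hi) (1 / α)
        rw [rpow_one_sub_mul_eq_mul_div_rpow (hA i hi) (div_pos hb hS) hα, div_div_cancel₀ hb.ne']
    _ = S ^ α := by rw [← sum_mul, ← sum_div, div_self hS.ne', one_mul]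

end Variational

theorem sum_rpow_one_sub_mul_sum_eq_sum_mul_rpow_sub_one {X Y : Type*} [Fintype X] [Fintype Y]
    {p : X × Y → ℝ} {pX : X → ℝ} {q : Y → ℝ} (hp : ∀ z, 0 < p z) (hpX : ∀ x, 0 < pX x)
    (hq : ∀ y, 0 < q y) (α : ℝ) :
    ∑ y, q y ^ (1 - α) * ∑ x, (p (x, y) / pX x) ^ α * pX x
      = ∑ z, p z * (p z / (pX z.1 * q z.2)) ^ (α - 1) := by
  simp only [mul_sum, Fintype.sum_prod_type]
  rw [sum_comm]
  refine sum_congr rfl fun x _ ↦ sum_congr rfl fun y _ ↦ ?_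
  have ha := hp (x, y)
  rw [div_rpow ha.le (hpX x).le, div_rpow ha.le (mul_pos (hpX x) (hq y)).le,
    mul_rpow (hpX x).le (hq y).le, rpow_sub ha, rpow_sub (hpX x), rpow_sub (hq y),
    rpow_sub (hq y), rpow_one, rpow_one, rpow_one]
  field_simp

/-- Monotonicity of negative-order Sibson mutual information:
if `α₂ < α₁ < 0` then `I_{α₁}(X,Y) ≤ I_{α₂}(X,Y)`. -/
theorem sibson_neg_order_mono
    {X Y : Type*} [Fintype X] [Fintype Y]
    (p : X × Y → ℝ) (hp : ∀ z, 0 < p z) (hp1 : ∑ z, p z = 1)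
    (pX : X → ℝ) (hpX : ∀ x, pX x = ∑ y, p (x, y))
    (α₁ α₂ : ℝ) (h21 : α₂ < α₁) (h10 : α₁ < 0) :
    (α₁ / (1 - α₁)) *
        Real.log (∑ y, (∑ x, (p (x, y) / pX x) ^ α₁ * pX x) ^ (1 / α₁))
      ≤ (α₂ / (1 - α₂)) *
        Real.log (∑ y, (∑ x, (p (x, y) / pX x) ^ α₂ * pX x) ^ (1 / α₂)) := by
  have hα₂ : α₂ < 0 := h21.trans h10
  obtain ⟨x₀, y₀⟩ : Nonempty (X × Y) := by
    by_contra h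
    simp [not_nonempty_iff.1 h] at hp1
  have hpX₀ : ∀ x, 0 < pX x := fun x ↦ hpX x ▸ sum_pos (fun y _ ↦ hp (x, y)) ⟨y₀, mem_univ _⟩
  let A (α : ℝ) (y : Y) : ℝ := ∑ x, (p (x, y) / pX x) ^ α * pX x
  let S (α : ℝ) : ℝ := ∑ y, A α y ^ (1 / α)
  have hA : ∀ α y, 0 < A α y := fun α y ↦ sum_pos
    (fun x _ ↦ mul_pos (rpow_pos_of_pos (div_pos (hp _) (hpX₀ x)) _) (hpX₀ x)) ⟨x₀, mem_univ _⟩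
  have hS : ∀ α, 0 < S α := fun α ↦
    sum_pos (fun y _ ↦ rpow_pos_of_pos (hA α y) _) ⟨y₀, mem_univ _⟩
  -- the minimiser of the variational formula at order α₂
  let q (y : Y) : ℝ := A α₂ y ^ (1 / α₂) / S α₂
  have hq : ∀ y, 0 < q y := fun y ↦ div_pos (rpow_pos_of_pos (hA α₂ y) _) (hS α₂)
  let T (α : ℝ) : ℝ := ∑ y, q y ^ (1 - α) * A α y
  have hT : ∀ α, T α = ∑ z, p z * (p z / (pX z.1 * q z.2)) ^ (α - 1) :=
    sum_rpow_one_sub_mul_sum_eq_sum_mul_rpow_sub_one hp hpX₀ hq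
  have hT₁ : S α₁ ^ α₁ ≤ T α₁ := rpow_sum_rpow_one_div_le_sum_rpow_one_sub_mul _
    (fun y _ ↦ hA α₁ y) (fun y _ ↦ hq y) (by rw [← sum_div, div_self (hS α₂).ne']) h10
  have hT₂ : T α₂ = S α₂ ^ α₂ := sum_rpow_one_sub_mul_eq_rpow_sum_rpow_one_div _
    (fun y _ ↦ hA α₂ y) ⟨y₀, mem_univ _⟩ hα₂.ne
  have hmono := inv_mul_log_sum_mul_rpow_le_of_lt_of_neg univ (fun z _ ↦ (hp z).le) hp1
    (fun z _ ↦ div_pos (hp z) (mul_pos (hpX₀ z.1) (hq z.2)))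
    (by linarith : α₂ - 1 < α₁ - 1) (by linarith)
  rw [← hT, ← hT, hT₂, log_rpow (hS α₂)] at hmono
  have hlog₁ : α₁ * log (S α₁) ≤ log (T α₁) :=
    log_rpow (hS α₁) α₁ ▸ log_le_log (rpow_pos_of_pos (hS α₁) _) hT₁
  calc α₁ / (1 - α₁) * log (S α₁) = -((α₁ - 1)⁻¹ * (α₁ * log (S α₁))) := by
        rw [← neg_sub α₁ 1, div_neg]; ring
    _ ≤ -((α₁ - 1)⁻¹ * log (T α₁)) :=
        neg_le_neg (mul_le_mul_of_nonpos_left hlog₁ (inv_nonpos.2 (by linarith)))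
    _ ≤ -((α₂ - 1)⁻¹ * (α₂ * log (S α₂))) := neg_le_neg hmono
    _ = α₂ / (1 - α₂) * log (S α₂) := by
        rw [← neg_sub α₂ 1, div_neg]; ring
end

section
/- Limiting value at α = -∞: as α → -∞, I_α(X,Y) = (α/(1-α)) · log Σ_y (Σ_x p_{Y|X=x}(y)^α p_X(x))^{1/α} converges to -log Σ_y min_{x : p_X(x)>0} p_{Y|X=x}(y). -/
/-!
For each `y`, the inner expression is a weighted power mean of order `α` of the positive numbers
`x ↦ p_{Y|X=x}(y)` with positive weights `p_X`. With `m` the minimum, the sum is squeezed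
between `m ^ α * p_X(x₀)` (the term of a minimiser `x₀`) and `m ^ α * Σ p_X`; raising to
`1 / α` gives `m` times a constant to the power `1 / α`, which tends to `m`. So the sum over `y`
tends to `Σ_y min_x p_{Y|X=x}(y) > 0`, its logarithm converges, and `α / (1 - α) → -1`.
-/

open Real Finset Filter Topology

theorem tendsto_div_one_sub_atBot : Tendsto (fun α : ℝ => α / (1 - α)) atBot (𝓝 (-1)) := by
  have h : Tendsto (fun α : ℝ => (1 - α)⁻¹ - 1) atBot (𝓝 (0 - 1)) :=
    (tendsto_inv_atTop_zero.comp
      (tendsto_atTop_add_const_left _ 1 tendsto_neg_atBot_atTop)).sub_const 1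
  rw [zero_sub] at h
  refine h.congr' ?_
  filter_upwards [eventually_lt_atBot (1 : ℝ)] with α hα
  have : 1 - α ≠ 0 := sub_ne_zero.mpr hα.ne'
  field_simp
  ring

theorem tendsto_const_rpow_one_div_atBot {c : ℝ} (hc : 0 < c) :
    Tendsto (fun α : ℝ => c ^ (1 / α)) atBot (𝓝 1) := by
  simpa [Function.comp_def] using
    (continuousAt_const_rpow hc.ne' (b := 0)).tendsto.comp tendsto_inv_atBot_zero

theorem rpow_mul_rpow_one_div {m c α : ℝ} (hm : 0 ≤ m) (hc : 0 ≤ c) (hα : α ≠ 0) :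
    (m ^ α * c) ^ (1 / α) = m * c ^ (1 / α) := by
  rw [mul_rpow (rpow_nonneg hm α) hc, one_div, rpow_rpow_inv hm hα]

theorem tendsto_rpow_one_div_atBot_of_bounds {S : ℝ → ℝ} {m c C : ℝ} (hm : 0 < m) (hc : 0 < c)
    (hlb : ∀ α < 0, m ^ α * c ≤ S α) (hub : ∀ α < 0, S α ≤ m ^ α * C) :
    Tendsto (fun α => S α ^ (1 / α)) atBot (𝓝 m) := by
  have hC : 0 < C :=
    hc.trans_le (le_of_mul_le_mul_left ((hlb (-1) (by norm_num)).trans (hub (-1) (by norm_num)))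
      (rpow_pos_of_pos hm _))
  have hlim : ∀ {d : ℝ}, 0 < d → Tendsto (fun α : ℝ => m * d ^ (1 / α)) atBot (𝓝 m) := fun hd => by
    simpa using (tendsto_const_rpow_one_div_atBot hd).const_mul m
  refine tendsto_of_tendsto_of_tendsto_of_le_of_le' (hlim hC) (hlim hc) ?_ ?_ <;>
    filter_upwards [eventually_lt_atBot (0 : ℝ)] with α hα <;>
    have hinv : 1 / α ≤ 0 := (one_div_neg.mpr hα).le
  · rw [← rpow_mul_rpow_one_div hm.le hC.le hα.ne]
    exact rpow_le_rpow_of_nonpos ((by positivity : 0 < m ^ α * c).trans_le (hlb α hα)) (hub α hα) hinv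
  · rw [← rpow_mul_rpow_one_div hm.le hc.le hα.ne]
    exact rpow_le_rpow_of_nonpos (by positivity) (hlb α hα) hinv

theorem tendsto_sum_rpow_mul_rpow_one_div_atBot {ι : Type*} [Fintype ι] [Nonempty ι]
    {f w : ι → ℝ} (hf : ∀ i, 0 < f i) (hw : ∀ i, 0 < w i) :
    Tendsto (fun α : ℝ => (∑ i, f i ^ α * w i) ^ (1 / α)) atBot
      (𝓝 (univ.inf' univ_nonempty f)) := by
  obtain ⟨i₀, -, hi₀⟩ := exists_mem_eq_inf' univ_nonempty f
  refine tendsto_rpow_one_div_atBot_of_bounds (hi₀ ▸ hf i₀) (hw i₀) (C := ∑ i, w i) ?_ ?_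
  · intro α _
    rw [hi₀]
    exact single_le_sum (fun i _ => mul_nonneg (rpow_nonneg (hf i).le α) (hw i).le) (mem_univ i₀)
  · intro α hα
    rw [mul_sum]
    refine sum_le_sum fun i _ => mul_le_mul_of_nonneg_right ?_ (hw i).le
    exact rpow_le_rpow_of_nonpos (hi₀ ▸ hf i₀) (inf'_le _ (mem_univ i)) hα.le

theorem sibson_neg_order_tendsto_atBot_general
    {X Y : Type*} [Fintype X] [Nonempty X] [Fintype Y]
    (p : X × Y → ℝ) (hp : ∀ z, 0 < p z)
    (pX : X → ℝ) (hpX : ∀ x, pX x = ∑ y, p (x, y)) :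
    Filter.Tendsto
      (fun α : ℝ => (α / (1 - α)) *
        Real.log (∑ y, (∑ x, (p (x, y) / pX x) ^ α * pX x) ^ (1 / α)))
      Filter.atBot
      (nhds (-Real.log (∑ y,
        Finset.univ.inf' Finset.univ_nonempty (fun x => p (x, y) / pX x)))) := by
  rcases isEmpty_or_nonempty Y with hY | hY
  · simp
  have hpX_pos : ∀ x, 0 < pX x := fun x =>
    hpX x ▸ sum_pos (fun y _ => hp (x, y)) univ_nonempty
  have hq_pos : ∀ x y, 0 < p (x, y) / pX x := fun x y => div_pos (hp _) (hpX_pos x)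
  have hmin_pos : 0 < ∑ y, univ.inf' univ_nonempty (fun x => p (x, y) / pX x) :=
    sum_pos (fun y _ => (lt_inf'_iff _).mpr fun x _ => hq_pos x y) univ_nonempty
  have hsum := tendsto_finsetSum univ fun y _ =>
    tendsto_sum_rpow_mul_rpow_one_div_atBot (hq_pos · y) hpX_pos
  simpa using tendsto_div_one_sub_atBot.mul (hsum.log hmin_pos.ne')

/-- Limiting value at `α = -∞`: as `α → -∞`,
`I_α(X,Y) = (α/(1-α)) · log Σ_y (Σ_x p_{Y|X=x}(y)^α p_X(x))^{1/α}` converges to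
`-log Σ_y min_{x} p_{Y|X=x}(y)`. -/
theorem sibson_neg_order_tendsto_atBot
    {X Y : Type*} [Fintype X] [Nonempty X] [Fintype Y]
    (p : X × Y → ℝ) (hp : ∀ z, 0 < p z) (hp1 : ∑ z, p z = 1)
    (pX : X → ℝ) (hpX : ∀ x, pX x = ∑ y, p (x, y)) :
    Filter.Tendsto
      (fun α : ℝ => (α / (1 - α)) *
        Real.log (∑ y, (∑ x, (p (x, y) / pX x) ^ α * pX x) ^ (1 / α)))
      Filter.atBot
      (nhds (-Real.log (∑ y,
        Finset.univ.inf' Finset.univ_nonempty (fun x => p (x, y) / pX x)))) :=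
  sibson_neg_order_tendsto_atBot_general p hp pX hpX
end

section
/- Upper bound by maximal-cost leakage: for every α with -∞ < α < 0, I_α(X,Y) ≤ -log Σ_y min_{x} p_{Y|X=x}(y), where I_α(X,Y) = (α/(1-α)) · log Σ_y (Σ_x p_{Y|X=x}(y)^α p_X(x))^{1/α}. -/
open Real Finset

/-- Upper bound by maximal-cost leakage: for every `-∞ < α < 0`,
`I_α(X,Y) ≤ -log Σ_y min_x p_{Y|X=x}(y)`. -/
theorem sibson_neg_order_le_maximal_cost_leakage
    {X Y : Type*} [Fintype X] [Nonempty X] [Fintype Y]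
    (p : X × Y → ℝ) (hp : ∀ z, 0 < p z) (hp1 : ∑ z, p z = 1)
    (pX : X → ℝ) (hpX : ∀ x, pX x = ∑ y, p (x, y))
    (α : ℝ) (hα : α < 0) :
    (α / (1 - α)) *
        Real.log (∑ y, (∑ x, (p (x, y) / pX x) ^ α * pX x) ^ (1 / α))
      ≤ -Real.log (∑ y,
          Finset.univ.inf' Finset.univ_nonempty (fun x => p (x, y) / pX x)) := by
  rcases isEmpty_or_nonempty Y with hY | hY
  · simp
  have h1α : (0:ℝ) < 1 - α := by linarith
  have hα0 : α ≠ 0 := ne_of_lt hα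
  have hpX0 : ∀ x, 0 < pX x := fun x => by
    rw [hpX]; exact Finset.sum_pos (fun y _ => hp _) Finset.univ_nonempty
  have hq : ∀ x y, 0 < p (x, y) / pX x := fun x y => div_pos (hp _) (hpX0 x)
  set m : Y → ℝ := fun y => Finset.univ.inf' Finset.univ_nonempty (fun x => p (x, y) / pX x)
    with hm
  have hmle : ∀ x y, m y ≤ p (x, y) / pX x := fun x y =>
    Finset.inf'_le _ (Finset.mem_univ x)
  have hmpos : ∀ y, 0 < m y := fun y => by
    obtain ⟨x, -, hx⟩ := Finset.exists_mem_eq_inf' (Finset.univ_nonempty (α := X))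
      (fun x => p (x, y) / pX x)
    rw [hm]; simp only []; rw [hx]; exact hq x y
  have hsumpX : ∑ x, pX x = 1 := by
    rw [← hp1, Fintype.sum_prod_type]
    exact Finset.sum_congr rfl fun x _ => hpX x
  set S : ℝ := ∑ y, (∑ x, (p (x, y) / pX x) ^ α * pX x) ^ (1 / α) with hS
  have key : ∀ y, m y ≤ (∑ x, (p (x, y) / pX x) ^ α * pX x) ^ (1 / α) := by
    intro y
    have h1 : ∑ x, (p (x, y) / pX x) ^ α * pX x ≤ (m y) ^ α := by
      calc ∑ x, (p (x, y) / pX x) ^ α * pX x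
          ≤ ∑ x, (m y) ^ α * pX x := by
            apply Finset.sum_le_sum
            intro x _
            exact mul_le_mul_of_nonneg_right
              (Real.rpow_le_rpow_of_nonpos (hmpos y) (hmle x y) hα.le) (hpX0 x).le
        _ = (m y) ^ α := by rw [← Finset.mul_sum, hsumpX, mul_one]
    have h2 : 0 < ∑ x, (p (x, y) / pX x) ^ α * pX x :=
      Finset.sum_pos (fun x _ => mul_pos (Real.rpow_pos_of_pos (hq x y) α) (hpX0 x))
        Finset.univ_nonempty
    have h3 := Real.rpow_le_rpow_of_nonpos h2 h1 (by
      exact (div_neg_of_pos_of_neg one_pos hα).le)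
    calc m y = ((m y) ^ α) ^ (1 / α) := by
          rw [← Real.rpow_mul (hmpos y).le, mul_one_div_cancel hα0, Real.rpow_one]
      _ ≤ _ := h3
  have hMS : ∑ y, m y ≤ S := Finset.sum_le_sum fun y _ => key y
  have hMpos : 0 < ∑ y, m y :=
    Finset.sum_pos (fun y _ => hmpos y) Finset.univ_nonempty
  have hSpos : 0 < S := lt_of_lt_of_le hMpos hMS
  have hM1 : ∑ y, m y ≤ 1 := by
    calc ∑ y, m y ≤ ∑ y, ∑ x, p (x, y) := by
          apply Finset.sum_le_sum
          intro y _
          calc m y = ∑ x, m y * pX x := by rw [← Finset.mul_sum, hsumpX, mul_one]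
            _ ≤ ∑ x, (p (x, y) / pX x) * pX x :=
                Finset.sum_le_sum fun x _ =>
                  mul_le_mul_of_nonneg_right (hmle x y) (hpX0 x).le
            _ = ∑ x, p (x, y) := Finset.sum_congr rfl fun x _ =>
                div_mul_cancel₀ _ (hpX0 x).ne'
      _ = 1 := by rw [Finset.sum_comm, ← Fintype.sum_prod_type, hp1]
  have hlog1 : Real.log (∑ y, m y) ≤ Real.log S := Real.log_le_log hMpos hMS
  have hlog2 : Real.log (∑ y, m y) ≤ 0 := Real.log_nonpos hMpos.le hM1
  have hc1 : α / (1 - α) ≤ 0 := div_nonpos_of_nonpos_of_nonneg hα.le h1α.le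
  have hc2 : -1 ≤ α / (1 - α) := by
    rw [le_div_iff₀ h1α]; linarith
  nlinarith [mul_nonneg (neg_nonneg.2 hc1) (sub_nonneg.2 hlog1),
    mul_nonneg (by linarith : (0:ℝ) ≤ 1 + α / (1 - α)) (neg_nonneg.2 hlog2)]
end

section
/- Data processing inequality for negative-order Sibson mutual information (second leg): if X - Y - Z is a Markov chain of finite random variables with strictly positive joint distribution, then for α < 0, I_α(X,Z) ≤ I_α(X,Y), where I_α(U,V) = -max_{q_V} D_α(p_{UV} ‖ p_U ⊗ q_V). -/
/-!
For `α < 0` the weighted power mean `M(v) = (∑ₓ v(x)^α p_X(x))^(1/α)` is positively homogeneous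
and superadditive (a reverse Minkowski inequality, obtained from Hölder's inequality by duality).
The Markov property writes `p_{Z=z|X} = ∑_y W(z|y) p_{Y=y|X}` with the channel `W = p_{Z|Y}`, so
`∑_z M(p_{Z=z|X}) ≥ ∑_z ∑_y W(z|y) M(p_{Y=y|X}) = ∑_y M(p_{Y=y|X})`. As `α / (1 - α) < 0`,
taking logarithms reverses this inequality.
-/

open Real Finset

section PowerSums

variable {ι κ μ : Type*} [Fintype ι] [Fintype κ] [Fintype μ] {α : ℝ}

theorem Lp_mul_Lp_rpow_le_inner_of_neg [Nonempty ι] (hα : α < 0) {b c : ι → ℝ}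
    (hb : ∀ i, 0 < b i) (hc : ∀ i, 0 < c i) :
    (∑ i, b i ^ α) ^ (1 / α) * (∑ i, c i ^ α) ^ ((α - 1) / α) ≤ ∑ i, c i ^ (α - 1) * b i := by
  set r := α / (α - 1) with hr_def
  have hα1 : α - 1 < 0 := by linarith
  have hαne := hα.ne
  have hα1ne := hα1.ne
  have htriple : (1 : ℝ).HolderTriple (-α) r :=
    ⟨by rw [hr_def]; field_simp; ring, one_pos, neg_pos.2 hα⟩
  have e1 : r * ((α - 1) / α) = 1 := by rw [hr_def]; field_simp
  have e2 : r / -α * ((α - 1) / α) = -(1 / α) := by rw [hr_def]; field_simp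
  -- Hölder with exponents `1, -α; r` applied to `c ^ (α - 1) = (c ^ (α - 1) * b) * b⁻¹`
  have holder := Lr_rpow_le_Lp_mul_Lq_of_nonneg univ htriple
    (f := fun i => c i ^ (α - 1) * b i) (g := fun i => (b i)⁻¹)
    (fun i _ => (mul_pos (rpow_pos_of_pos (hc i) _) (hb i)).le) (fun i _ => (inv_pos.2 (hb i)).le)
  have hfg : ∀ i, (c i ^ (α - 1) * b i * (b i)⁻¹) ^ r = c i ^ α := fun i => by
    rw [mul_inv_cancel_right₀ (hb i).ne', ← rpow_mul (hc i).le, hr_def,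
      mul_div_cancel₀ _ hα1.ne]
  have hg : ∀ i, (b i)⁻¹ ^ (-α) = b i ^ α := fun i => by
    rw [inv_rpow (hb i).le, ← rpow_neg (hb i).le, neg_neg]
  simp only [hfg, hg, rpow_one, div_one] at holder
  set C := ∑ i, c i ^ α
  set D := ∑ i, c i ^ (α - 1) * b i
  set E := ∑ i, b i ^ α
  have hD : 0 ≤ D := sum_nonneg fun i _ => (mul_pos (rpow_pos_of_pos (hc i) _) (hb i)).le
  have hE : 0 < E := sum_pos (fun i _ => rpow_pos_of_pos (hb i) _) univ_nonempty
  have hC : C ^ ((α - 1) / α) ≤ D * E ^ (-(1 / α)) := by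
    calc C ^ ((α - 1) / α) ≤ (D ^ r * E ^ (r / -α)) ^ ((α - 1) / α) :=
          rpow_le_rpow (sum_nonneg fun i _ => (rpow_pos_of_pos (hc i) _).le) holder
            (div_nonneg_of_nonpos hα1.le hα.le)
      _ = D * E ^ (-(1 / α)) := by
          rw [mul_rpow (rpow_nonneg hD _) (rpow_nonneg hE.le _), ← rpow_mul hD, ← rpow_mul hE.le,
            e1, e2, rpow_one]
  calc E ^ (1 / α) * C ^ ((α - 1) / α) ≤ E ^ (1 / α) * (D * E ^ (-(1 / α))) :=
        mul_le_mul_of_nonneg_left hC (rpow_nonneg hE.le _)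
    _ = D := by rw [mul_left_comm, ← rpow_add hE, add_neg_cancel, rpow_zero, mul_one]

theorem sum_Lp_le_Lp_sum_of_neg [Nonempty ι] [Nonempty κ] (hα : α < 0) {u : κ → ι → ℝ}
    (hu : ∀ k i, 0 < u k i) :
    ∑ k, (∑ i, u k i ^ α) ^ (1 / α) ≤ (∑ i, (∑ k, u k i) ^ α) ^ (1 / α) := by
  set T := fun i => ∑ k, u k i
  set B := ∑ i, T i ^ α
  have hT : ∀ i, 0 < T i := fun i => sum_pos (fun k _ => hu k i) univ_nonempty
  have hB : 0 < B := sum_pos (fun i _ => rpow_pos_of_pos (hT i) _) univ_nonempty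
  have hdual : (∑ k, (∑ i, u k i ^ α) ^ (1 / α)) * B ^ ((α - 1) / α) ≤ B :=
    calc (∑ k, (∑ i, u k i ^ α) ^ (1 / α)) * B ^ ((α - 1) / α)
        ≤ ∑ k, ∑ i, T i ^ (α - 1) * u k i := by
          rw [sum_mul]
          exact sum_le_sum fun k _ => Lp_mul_Lp_rpow_le_inner_of_neg hα (hu k) hT
      _ = B := by
          rw [sum_comm]
          refine sum_congr rfl fun i _ => ?_
          rw [← mul_sum, ← rpow_add_one (hT i).ne', sub_add_cancel]
  have hsplit : B = B ^ (1 / α) * B ^ ((α - 1) / α) := by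
    rw [← rpow_add hB, ← add_div, add_sub_cancel, div_self hα.ne, rpow_one]
  exact le_of_mul_le_mul_right (hdual.trans_eq hsplit) (rpow_pos_of_pos hB _)

noncomputable def powerMean (w v : ι → ℝ) (α : ℝ) : ℝ := (∑ i, v i ^ α * w i) ^ (1 / α)

theorem powerMean_eq_Lp (hα : α ≠ 0) {w v : ι → ℝ} (hw : ∀ i, 0 ≤ w i) (hv : ∀ i, 0 ≤ v i) :
    powerMean w v α = (∑ i, (w i ^ (1 / α) * v i) ^ α) ^ (1 / α) := by
  unfold powerMean
  congr 1
  refine sum_congr rfl fun i _ => ?_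
  rw [mul_rpow (rpow_nonneg (hw i) _) (hv i), ← rpow_mul (hw i), one_div_mul_cancel hα, rpow_one,
    mul_comm]

theorem powerMean_pos [Nonempty ι] {w v : ι → ℝ} (hw : ∀ i, 0 < w i) (hv : ∀ i, 0 < v i) :
    0 < powerMean w v α :=
  rpow_pos_of_pos (sum_pos (fun i _ => mul_pos (rpow_pos_of_pos (hv i) _) (hw i)) univ_nonempty) _

theorem powerMean_const_mul (hα : α ≠ 0) {w v : ι → ℝ} (hw : ∀ i, 0 ≤ w i) (hv : ∀ i, 0 ≤ v i)
    {c : ℝ} (hc : 0 ≤ c) :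
    powerMean w (fun i => c * v i) α = c * powerMean w v α := by
  unfold powerMean
  simp_rw [mul_rpow hc (hv _), mul_assoc, ← mul_sum]
  rw [mul_rpow (rpow_nonneg hc _) (sum_nonneg fun i _ => mul_nonneg (rpow_nonneg (hv i) _) (hw i)),
    ← rpow_mul hc, mul_one_div_cancel hα, rpow_one]

theorem sum_powerMean_le_powerMean_sum_of_neg [Nonempty ι] [Nonempty κ] (hα : α < 0) {w : ι → ℝ}
    (hw : ∀ i, 0 < w i) {u : κ → ι → ℝ} (hu : ∀ k i, 0 < u k i) :
    ∑ k, powerMean w (u k) α ≤ powerMean w (fun i => ∑ k, u k i) α := by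
  simp_rw [powerMean_eq_Lp hα.ne (fun i => (hw i).le) (fun i => (hu _ i).le),
    powerMean_eq_Lp hα.ne (fun i => (hw i).le) (fun i => sum_nonneg fun k _ => (hu k i).le),
    mul_sum]
  exact sum_Lp_le_Lp_sum_of_neg hα fun k i => mul_pos (rpow_pos_of_pos (hw i) _) (hu k i)

theorem sum_powerMean_le_sum_powerMean_of_stochastic [Nonempty ι] [Nonempty κ] (hα : α < 0)
    {w : ι → ℝ} (hw : ∀ i, 0 < w i) {v : κ → ι → ℝ} (hv : ∀ k i, 0 < v k i) {W : κ → μ → ℝ}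
    (hW : ∀ k m, 0 < W k m) (hW1 : ∀ k, ∑ m, W k m = 1) :
    ∑ k, powerMean w (v k) α ≤ ∑ m, powerMean w (fun i => ∑ k, W k m * v k i) α :=
  calc ∑ k, powerMean w (v k) α = ∑ m, ∑ k, powerMean w (fun i => W k m * v k i) α := by
        rw [sum_comm]
        refine sum_congr rfl fun k _ => ?_
        simp_rw [powerMean_const_mul hα.ne (fun i => (hw i).le) (fun i => (hv k i).le)
          (hW k _).le, ← sum_mul, hW1, one_mul]
    _ ≤ ∑ m, powerMean w (fun i => ∑ k, W k m * v k i) α :=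
        sum_le_sum fun m _ =>
          sum_powerMean_le_powerMean_sum_of_neg hα hw fun k i => mul_pos (hW k m) (hv k i)

end PowerSums

/-- Data processing inequality for negative-order Sibson mutual information:
if `X - Y - Z` is a Markov chain with strictly positive joint pmf, then for `α < 0`,
`I_α(X,Z) ≤ I_α(X,Y)`. -/
theorem sibson_neg_order_data_processing
    {X Y Z : Type*} [Fintype X] [Fintype Y] [Fintype Z]
    (p : X × Y × Z → ℝ) (hp : ∀ w, 0 < p w) (hp1 : ∑ w, p w = 1)
    (pX : X → ℝ) (hpX : ∀ x, pX x = ∑ y, ∑ z, p (x, y, z))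
    (pY : Y → ℝ) (hpY : ∀ y, pY y = ∑ x, ∑ z, p (x, y, z))
    (pXY : X × Y → ℝ) (hpXY : ∀ x y, pXY (x, y) = ∑ z, p (x, y, z))
    (pYZ : Y × Z → ℝ) (hpYZ : ∀ y z, pYZ (y, z) = ∑ x, p (x, y, z))
    (pXZ : X × Z → ℝ) (hpXZ : ∀ x z, pXZ (x, z) = ∑ y, p (x, y, z))
    (hmarkov : ∀ x y z, p (x, y, z) * pY y = pXY (x, y) * pYZ (y, z))
    (α : ℝ) (hα : α < 0) :
    (α / (1 - α)) *
        Real.log (∑ z, (∑ x, (pXZ (x, z) / pX x) ^ α * pX x) ^ (1 / α))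
      ≤ (α / (1 - α)) *
        Real.log (∑ y, (∑ x, (pXY (x, y) / pX x) ^ α * pX x) ^ (1 / α)) := by
  obtain ⟨⟨x₀, y₀, z₀⟩⟩ : Nonempty (X × Y × Z) :=
    univ_nonempty_iff.1 (nonempty_of_sum_ne_zero (hp1 ▸ one_ne_zero))
  have : Nonempty X := ⟨x₀⟩
  have : Nonempty Y := ⟨y₀⟩
  have : Nonempty Z := ⟨z₀⟩
  have hpX_pos x : 0 < pX x :=
    hpX x ▸ sum_pos (fun y _ => sum_pos (fun z _ => hp _) univ_nonempty) univ_nonempty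
  have hpY_pos y : 0 < pY y :=
    hpY y ▸ sum_pos (fun x _ => sum_pos (fun z _ => hp _) univ_nonempty) univ_nonempty
  have hpXY_pos x y : 0 < pXY (x, y) := hpXY x y ▸ sum_pos (fun z _ => hp _) univ_nonempty
  have hpYZ_pos y z : 0 < pYZ (y, z) := hpYZ y z ▸ sum_pos (fun x _ => hp _) univ_nonempty
  have hchannel y : ∑ z, pYZ (y, z) / pY y = 1 := by
    rw [← sum_div, div_eq_one_iff_eq (hpY_pos y).ne', hpY y]
    simp_rw [hpYZ]
    exact sum_comm
  have hcompose x z :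
      pXZ (x, z) / pX x = ∑ y, pYZ (y, z) / pY y * (pXY (x, y) / pX x) := by
    rw [hpXZ, sum_div]
    refine sum_congr rfl fun y _ => ?_
    field_simp [(hpY_pos y).ne', (hpX_pos x).ne']
    rw [hmarkov, mul_comm]
  have hle := sum_powerMean_le_sum_powerMean_of_stochastic hα hpX_pos
    (fun y x => div_pos (hpXY_pos x y) (hpX_pos x))
    (fun y z => div_pos (hpYZ_pos y z) (hpY_pos y)) hchannel
  simp_rw [← hcompose] at hle
  have hpos : 0 < ∑ y, powerMean pX (fun x => pXY (x, y) / pX x) α :=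
    sum_pos (fun y _ => powerMean_pos hpX_pos fun x => div_pos (hpXY_pos x y) (hpX_pos x))
      univ_nonempty
  exact mul_le_mul_of_nonpos_left (log_le_log hpos hle)
    (div_nonpos_of_nonpos_of_nonneg hα.le (by linarith))
end

section
/- Concavity in the channel: for fixed marginal p_X, the map taking the conditional distribution p_{Y|X} to Σ_y (Σ_x p_{Y|X=x}(y)^α p_X(x))^{1/α} is concave on the set of channels from X to Y, for every α < 0. -/
/-!
Per output symbol `y` the claim is concavity of the weighted power mean
`M(a) = (∑ₓ a(x)^α w(x))^(1/α)`, `w = p_X`, at `a = K(·, y)`. For `α < 0`, `M` is positively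
homogeneous and `c ≤ M(a) ↔ ∑ₓ (a(x)/c)^α w(x) ≤ 1`, a sublevel set of a convex function since
`t ↦ t^α` is convex. With `A = M(a)`, `B = M(b)` and `C = sA + tB`, the vector `(s a + t b)/C` is
the convex combination of `a/A` and `b/B` with weights `sA/C`, `tB/C`, hence `C ≤ M(s a + t b)`.
-/

open Real Finset

section WeightedPowerMean

variable {ι : Type*} [Fintype ι] {w : ι → ℝ} {p : ℝ}

noncomputable def weightedPowerMean (w : ι → ℝ) (p : ℝ) (a : ι → ℝ) : ℝ :=
  (∑ i, a i ^ p * w i) ^ (1 / p)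

theorem convexOn_sum_rpow_mul (hp : p ≤ 0) (hw : ∀ i, 0 ≤ w i) :
    ConvexOn ℝ (Set.univ.pi fun _ ↦ Set.Ioi 0) fun a : ι → ℝ ↦ ∑ i, a i ^ p * w i := by
  refine ⟨convex_pi fun _ _ ↦ convex_Ioi 0, fun a ha b hb s t hs ht hst ↦ ?_⟩
  simp only [Set.mem_univ_pi] at ha hb
  simp only [smul_eq_mul, mul_sum, ← sum_add_distrib]
  refine sum_le_sum fun i _ ↦ ?_
  have h := (convexOn_rpow_of_nonpos hp).2 (ha i) (hb i) hs ht hst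
  simp only [Pi.add_apply, Pi.smul_apply, smul_eq_mul] at h ⊢
  nlinarith [hw i]

theorem weightedPowerMean_smul (hp : p ≠ 0) (hw : ∀ i, 0 ≤ w i) {c : ℝ} (hc : 0 ≤ c)
    {a : ι → ℝ} (ha : ∀ i, 0 ≤ a i) :
    weightedPowerMean w p (c • a) = c * weightedPowerMean w p a := by
  have hsum : 0 ≤ ∑ i, a i ^ p * w i :=
    sum_nonneg fun i _ ↦ mul_nonneg (rpow_nonneg (ha i) p) (hw i)
  simp only [weightedPowerMean, Pi.smul_apply, smul_eq_mul, mul_rpow hc (ha _), mul_assoc,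
    ← mul_sum]
  rw [mul_rpow (rpow_nonneg hc p) hsum, one_div, rpow_rpow_inv hc hp]

section Nonempty

variable [Nonempty ι]

theorem sum_rpow_mul_pos (hw : ∀ i, 0 < w i) {a : ι → ℝ} (ha : ∀ i, 0 < a i) :
    0 < ∑ i, a i ^ p * w i :=
  sum_pos (fun i _ ↦ mul_pos (rpow_pos_of_pos (ha i) p) (hw i)) univ_nonempty

theorem weightedPowerMean_pos (hw : ∀ i, 0 < w i) {a : ι → ℝ} (ha : ∀ i, 0 < a i) :
    0 < weightedPowerMean w p a :=
  rpow_pos_of_pos (sum_rpow_mul_pos hw ha) _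

theorem one_le_weightedPowerMean_iff (hp : p < 0) (hw : ∀ i, 0 < w i) {a : ι → ℝ}
    (ha : ∀ i, 0 < a i) :
    1 ≤ weightedPowerMean w p a ↔ ∑ i, a i ^ p * w i ≤ 1 := by
  rw [weightedPowerMean, one_div, le_rpow_inv_iff_of_neg one_pos (sum_rpow_mul_pos hw ha) hp,
    one_rpow]

theorem le_weightedPowerMean_iff (hp : p < 0) (hw : ∀ i, 0 < w i) {a : ι → ℝ}
    (ha : ∀ i, 0 < a i) {c : ℝ} (hc : 0 < c) :
    c ≤ weightedPowerMean w p a ↔ ∑ i, (c⁻¹ • a) i ^ p * w i ≤ 1 := by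
  have hca : ∀ i, 0 < (c⁻¹ • a) i := fun i ↦ mul_pos (inv_pos.2 hc) (ha i)
  rw [← one_le_weightedPowerMean_iff hp hw hca,
    weightedPowerMean_smul hp.ne (fun i ↦ (hw i).le) (inv_nonneg.2 hc.le) fun i ↦ (ha i).le,
    le_inv_mul_iff₀ hc, mul_one]

end Nonempty

theorem concaveOn_weightedPowerMean (hp : p < 0) (hw : ∀ i, 0 < w i) :
    ConcaveOn ℝ (Set.univ.pi fun _ ↦ Set.Ioi 0) (weightedPowerMean w p) := by
  have hconv : Convex ℝ (Set.univ.pi fun _ : ι ↦ Set.Ioi (0 : ℝ)) :=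
    convex_pi fun _ _ ↦ convex_Ioi 0
  refine ⟨hconv, fun a ha b hb s t hs ht hst ↦ ?_⟩
  rcases isEmpty_or_nonempty ι with hι | hι
  · simp only [weightedPowerMean, univ_eq_empty, sum_empty, smul_eq_mul, ← add_mul, hst,
      one_mul, le_refl]
  have hab := hconv ha hb hs ht hst
  simp only [Set.mem_univ_pi] at ha hb hab
  set A := weightedPowerMean w p a
  set B := weightedPowerMean w p b
  have hA : 0 < A := weightedPowerMean_pos hw ha
  have hB : 0 < B := weightedPowerMean_pos hw hb
  set C := s * A + t * B
  have hC : 0 < C := by rcases hs.eq_or_lt with rfl | hs' <;> nlinarith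
  have hpos : ∀ {c : ℝ} {x : ι → ℝ}, 0 < c → (∀ i, 0 < x i) →
      c⁻¹ • x ∈ Set.univ.pi fun _ ↦ Set.Ioi 0 :=
    fun hc hx i _ ↦ mul_pos (inv_pos.2 hc) (hx i)
  have hcomb : (s * A / C) • A⁻¹ • a + (t * B / C) • B⁻¹ • b = C⁻¹ • (s • a + t • b) := by
    ext i
    simp only [Pi.add_apply, Pi.smul_apply, smul_eq_mul]
    field_simp
  have hlevel := (convexOn_sum_rpow_mul hp.le fun i ↦ (hw i).le).convex_le 1
    ⟨hpos hA ha, (le_weightedPowerMean_iff hp hw ha hA).1 le_rfl⟩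
    ⟨hpos hB hb, (le_weightedPowerMean_iff hp hw hb hB).1 le_rfl⟩
    (show 0 ≤ s * A / C by positivity) (show 0 ≤ t * B / C by positivity)
    (by rw [← add_div, div_self hC.ne'])
  rw [hcomb] at hlevel
  simpa only [smul_eq_mul] using (le_weightedPowerMean_iff hp hw hab hC).2 hlevel.2

end WeightedPowerMean

theorem sibson_neg_order_concave_in_channel_general
    {X Y : Type*} [Fintype X] [Fintype Y]
    (pX : X → ℝ) (hpX : ∀ x, 0 < pX x)
    (α : ℝ) (hα : α < 0)
    (K₁ K₂ : X × Y → ℝ)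
    (hK₁pos : ∀ x y, 0 < K₁ (x, y))
    (hK₂pos : ∀ x y, 0 < K₂ (x, y))
    (lam : ℝ) (hlam0 : 0 ≤ lam) (hlam1 : lam ≤ 1) :
    lam * (∑ y, (∑ x, K₁ (x, y) ^ α * pX x) ^ (1 / α))
        + (1 - lam) * (∑ y, (∑ x, K₂ (x, y) ^ α * pX x) ^ (1 / α))
      ≤ ∑ y, (∑ x, (lam * K₁ (x, y) + (1 - lam) * K₂ (x, y)) ^ α * pX x) ^ (1 / α) := by
  rw [mul_sum, mul_sum, ← sum_add_distrib]
  exact sum_le_sum fun y _ ↦ (concaveOn_weightedPowerMean hα hpX).2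
    (fun x _ ↦ hK₁pos x y) (fun x _ ↦ hK₂pos x y) hlam0 (sub_nonneg.2 hlam1) (by ring)

/-- Concavity in the channel: for fixed marginal `p_X`, the map sending a channel
`K` to `Σ_y (Σ_x K(x,y)^α p_X(x))^{1/α}` is concave on channels from `X` to `Y`,
for every `α < 0`. -/
theorem sibson_neg_order_concave_in_channel
    {X Y : Type*} [Fintype X] [Fintype Y]
    (pX : X → ℝ) (hpX : ∀ x, 0 < pX x) (hpX1 : ∑ x, pX x = 1)
    (α : ℝ) (hα : α < 0)
    (K₁ K₂ : X × Y → ℝ)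
    (hK₁pos : ∀ x y, 0 < K₁ (x, y)) (hK₁sum : ∀ x, ∑ y, K₁ (x, y) = 1)
    (hK₂pos : ∀ x y, 0 < K₂ (x, y)) (hK₂sum : ∀ x, ∑ y, K₂ (x, y) = 1)
    (lam : ℝ) (hlam0 : 0 ≤ lam) (hlam1 : lam ≤ 1) :
    lam * (∑ y, (∑ x, K₁ (x, y) ^ α * pX x) ^ (1 / α))
        + (1 - lam) * (∑ y, (∑ x, K₂ (x, y) ^ α * pX x) ^ (1 / α))
      ≤ ∑ y, (∑ x, (lam * K₁ (x, y) + (1 - lam) * K₂ (x, y)) ^ α * pX x) ^ (1 / α) :=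
  sibson_neg_order_concave_in_channel_general pX hpX α hα K₁ K₂ hK₁pos hK₂pos lam hlam0 hlam1
end

section
/- Doubly symmetric binary source: if X ~ Bernoulli(1/2), Y ~ Bernoulli(1/2), and P(Y ≠ X) = δ with 0 < δ < 1, then for every α < 0, I_α(X,Y) = -d_α(δ‖1/2), where d_α(p‖q) = (1/(α-1))·log(p^α q^{1-α} + (1-p)^α (1-q)^{1-α}). -/
open Real Finset

/-- Doubly symmetric binary source: if `X, Y ~ Ber(1/2)` with `P(Y ≠ X) = δ`,
`0 < δ < 1`, then for every `α < 0`, `I_α(X,Y) = -d_α(δ‖1/2)`, where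
`d_α(p‖q) = (1/(α-1))·log(p^α q^{1-α} + (1-p)^α (1-q)^{1-α})`. -/
theorem sibson_neg_order_binary_symmetric
    (δ : ℝ) (hδ0 : 0 < δ) (hδ1 : δ < 1)
    (p : Bool × Bool → ℝ)
    (hp : ∀ x y, p (x, y) = if x = y then (1 - δ) / 2 else δ / 2)
    (pX : Bool → ℝ) (hpX : ∀ x, pX x = ∑ y, p (x, y))
    (α : ℝ) (hα : α < 0) :
    (α / (1 - α)) *
        Real.log (∑ y, (∑ x, (p (x, y) / pX x) ^ α * pX x) ^ (1 / α))
      = -((1 / (α - 1)) *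
          Real.log (δ ^ α * (1 / 2 : ℝ) ^ (1 - α)
            + (1 - δ) ^ α * (1 - 1 / 2 : ℝ) ^ (1 - α))) := by
  have hδ1' : 0 < 1 - δ := by linarith
  have hpX2 : ∀ x, pX x = 1 / 2 := by
    intro x
    rw [hpX, Fintype.sum_bool]
    cases x <;> simp [hp] <;> ring
  have hT : 0 < δ ^ α + (1 - δ) ^ α := by positivity
  have hinner : ∀ y, (∑ x, (p (x, y) / pX x) ^ α * pX x)
      = (δ ^ α + (1 - δ) ^ α) / 2 := by
    intro y
    rw [Fintype.sum_bool]
    cases y <;>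
      · simp only [hp, hpX2]
        norm_num
        ring
  have hsum : (∑ y, (∑ x, (p (x, y) / pX x) ^ α * pX x) ^ (1 / α))
      = 2 * ((δ ^ α + (1 - δ) ^ α) / 2) ^ (1 / α) := by
    rw [Fintype.sum_bool, hinner, hinner]; ring
  rw [hsum]
  have hα' : α ≠ 0 := ne_of_lt hα
  have hα1 : (1 : ℝ) - α ≠ 0 := by linarith [hα]
  have hα2 : α - 1 ≠ 0 := by linarith
  have hTpos : 0 < (δ ^ α + (1 - δ) ^ α) / 2 := by linarith
  have h1 : Real.log (2 * ((δ ^ α + (1 - δ) ^ α) / 2) ^ (1 / α))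
      = Real.log 2 + (1 / α) * Real.log ((δ ^ α + (1 - δ) ^ α) / 2) := by
    rw [Real.log_mul (by norm_num) (ne_of_gt (Real.rpow_pos_of_pos hTpos _)),
      Real.log_rpow hTpos]
  have h2 : Real.log ((δ ^ α + (1 - δ) ^ α) / 2)
      = Real.log (δ ^ α + (1 - δ) ^ α) - Real.log 2 :=
    Real.log_div (ne_of_gt hT) (by norm_num)
  have h3 : δ ^ α * (1 / 2 : ℝ) ^ (1 - α) + (1 - δ) ^ α * (1 - 1 / 2 : ℝ) ^ (1 - α)
      = (1 / 2 : ℝ) ^ (1 - α) * (δ ^ α + (1 - δ) ^ α) := by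
    norm_num; ring
  have h4 : Real.log ((1 / 2 : ℝ) ^ (1 - α) * (δ ^ α + (1 - δ) ^ α))
      = (1 - α) * Real.log (1 / 2) + Real.log (δ ^ α + (1 - δ) ^ α) := by
    rw [Real.log_mul (ne_of_gt (Real.rpow_pos_of_pos (by norm_num) _)) (ne_of_gt hT),
      Real.log_rpow (by norm_num)]
  have h5 : Real.log (1 / 2 : ℝ) = -Real.log 2 := by
    rw [Real.log_div one_ne_zero (by norm_num), Real.log_one]; ring
  rw [h1, h2, h3, h4, h5]
  field_simp
  ring
end

section
/- Asymmetry via the binary erasure channel: let X ~ Bernoulli(1/2) and Y ∈ {0,1,e} with P(Y=x|X=x) = 1-δ, P(Y=e|X=x) = δ for 0 < δ < 1. Then for α < 0, I_α(X,Y) = -(α/(α-1))·log₂(δ + (1-δ)·2^{(α-1)/α}) and I_α(Y,X) = -(1/(α-1))·log₂(δ + (1-δ)·2^{α-1}); in particular, I_α(X,Y) ≠ I_α(Y,X) in general. -/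
open Real Finset

/-- Asymmetry via the binary erasure channel: with `X ~ Ber(1/2)` and `Y ∈ {0,1,e}`
obtained from `X` through an erasure channel with erasure probability `δ`,
for `α < 0` one has
`I_α(X,Y) = -(α/(α-1))·log₂(δ + (1-δ)·2^{(α-1)/α})` and
`I_α(Y,X) = -(1/(α-1))·log₂(δ + (1-δ)·2^{α-1})`.
Here `e` is encoded as `2 : Fin 3` and mutual information is computed in bits,
with sums restricted to strictly positive conditional probabilities. -/
theorem sibson_neg_order_erasure_asymmetry
    (δ : ℝ) (hδ0 : 0 < δ) (hδ1 : δ < 1)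
    (p : Bool × Fin 3 → ℝ)
    (hp : ∀ x y, p (x, y) =
      if y = (if x then (1 : Fin 3) else 0) then (1 - δ) / 2
      else if y = 2 then δ / 2 else 0)
    (pX : Bool → ℝ) (hpX : ∀ x, pX x = ∑ y, p (x, y))
    (pY : Fin 3 → ℝ) (hpY : ∀ y, pY y = ∑ x, p (x, y))
    (α : ℝ) (hα : α < 0) :
    (α / (1 - α)) *
        Real.logb 2 (∑ y,
          (∑ x ∈ Finset.univ.filter (fun x => 0 < p (x, y) / pX x),
            (p (x, y) / pX x) ^ α * pX x) ^ (1 / α))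
      = -(α / (α - 1)) * Real.logb 2 (δ + (1 - δ) * (2 : ℝ) ^ ((α - 1) / α))
    ∧
    (α / (1 - α)) *
        Real.logb 2 (∑ x : Bool,
          (∑ y ∈ Finset.univ.filter (fun y => 0 < p (x, y) / pY y),
            (p (x, y) / pY y) ^ α * pY y) ^ (1 / α))
      = -(1 / (α - 1)) * Real.logb 2 (δ + (1 - δ) * (2 : ℝ) ^ (α - 1)) := by
  have hα0 : α ≠ 0 := ne_of_lt hα
  have hα1 : α - 1 ≠ 0 := by intro h; linarith
  have h1α : 1 - α ≠ 0 := by intro h; linarith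
  have hd1 : (0:ℝ) < 1 - δ := by linarith
  have pf0 : p (false, 0) = (1-δ)/2 := by rw [hp, if_pos (by decide)]
  have pf1 : p (false, 1) = 0 := by rw [hp, if_neg (by decide), if_neg (by decide)]
  have pf2 : p (false, 2) = δ/2 := by rw [hp, if_neg (by decide), if_pos rfl]
  have pt0 : p (true, 0) = 0 := by rw [hp, if_neg (by decide), if_neg (by decide)]
  have pt1 : p (true, 1) = (1-δ)/2 := by rw [hp, if_pos (by decide)]
  have pt2 : p (true, 2) = δ/2 := by rw [hp, if_neg (by decide), if_pos rfl]
  have pXf : pX false = 1/2 := by rw [hpX, Fin.sum_univ_three, pf0, pf1, pf2]; ring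
  have pXt : pX true = 1/2 := by rw [hpX, Fin.sum_univ_three, pt0, pt1, pt2]; ring
  have pY0 : pY 0 = (1-δ)/2 := by rw [hpY, Fintype.sum_bool, pf0, pt0]; ring
  have pY1 : pY 1 = (1-δ)/2 := by rw [hpY, Fintype.sum_bool, pf1, pt1]; ring
  have pY2 : pY 2 = δ := by rw [hpY, Fintype.sum_bool, pf2, pt2]; ring
  constructor
  · -- first part
    have f0 : Finset.univ.filter (fun x : Bool => 0 < p (x, 0) / pX x) = {false} := by
      ext x; cases x <;> simp [pf0, pt0, pXf, pXt] <;> linarith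
    have f1 : Finset.univ.filter (fun x : Bool => 0 < p (x, 1) / pX x) = {true} := by
      ext x; cases x <;> simp [pf1, pt1, pXf, pXt] <;> linarith
    have f2 : Finset.univ.filter (fun x : Bool => 0 < p (x, 2) / pX x) = Finset.univ := by
      ext x; cases x <;> simp [pf2, pt2, pXf, pXt] <;> positivity
    rw [Fin.sum_univ_three, f0, f1, f2, Finset.sum_singleton, Finset.sum_singleton,
      Fintype.sum_bool, pf0, pt1, pf2, pt2, pXf, pXt]
    have key : ((1-δ)/2/(1/2)) ^ α * (1/2) = ((1-δ)^α) * (2:ℝ)⁻¹ := by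
      rw [show (1-δ)/2/(1/2) = 1-δ by ring]; norm_num
    have keyδ : (δ/2/(1/2)) ^ α * (1/2) + (δ/2/(1/2)) ^ α * (1/2) = δ ^ α := by
      rw [show δ/2/(1/2) = δ by ring]; ring
    rw [key, keyδ]
    have e1 : ((1-δ)^α * (2:ℝ)⁻¹) ^ (1/α) = (1-δ) * (2:ℝ)⁻¹ ^ (1/α) := by
      rw [Real.mul_rpow (by positivity) (by positivity), ← Real.rpow_mul hd1.le,
        mul_one_div, div_self hα0, Real.rpow_one]
    have e2 : (δ^α) ^ (1/α) = δ := by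
      rw [← Real.rpow_mul hδ0.le, mul_one_div, div_self hα0, Real.rpow_one]
    rw [e1, e2]
    have h2 : (2:ℝ)^((α-1)/α) = 2 * (2:ℝ)⁻¹^(1/α) := by
      rw [Real.inv_rpow (by norm_num : (0:ℝ) ≤ 2), ← Real.rpow_neg (by norm_num : (0:ℝ) ≤ 2),
        show (α-1)/α = 1 + (-(1/α)) by field_simp; ring,
        Real.rpow_add two_pos, Real.rpow_one]
    have hS : (1-δ) * (2:ℝ)⁻¹^(1/α) + (1-δ) * (2:ℝ)⁻¹^(1/α) + δ
        = δ + (1 - δ) * (2:ℝ)^((α-1)/α) := by rw [h2]; ring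
    rw [hS, show (1:ℝ)-α = -(α-1) by ring, div_neg]
  · -- second part
    set B : ℝ := δ + (1 - δ) * (2:ℝ)^(α-1) with hBdef
    have hB : 0 < B := by positivity
    have gf : Finset.univ.filter (fun y : Fin 3 => 0 < p (false, y) / pY y) = {0, 2} := by
      ext y; fin_cases y <;>
        simp [pf0, pf1, pf2, pY0, pY1, pY2] <;> positivity
    have gt : Finset.univ.filter (fun y : Fin 3 => 0 < p (true, y) / pY y) = {1, 2} := by
      ext y; fin_cases y <;>
        simp [pt0, pt1, pt2, pY0, pY1, pY2] <;> positivity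
    rw [Fintype.sum_bool, gf, gt, Finset.sum_pair (by decide), Finset.sum_pair (by decide),
      pf0, pf2, pt1, pt2, pY0, pY1, pY2]
    have hd2 : (1-δ)/2 ≠ 0 := by positivity
    have hone : (1-δ)/2/((1-δ)/2) = 1 := div_self hd2
    have hhalf : δ/2/δ = (2:ℝ)⁻¹ := by field_simp
    rw [hone, hhalf, Real.one_rpow]
    have h2a : (2:ℝ)⁻¹ ^ α = (2:ℝ)^(-α) := by
      rw [Real.inv_rpow (by norm_num : (0:ℝ) ≤ 2), ← Real.rpow_neg (by norm_num : (0:ℝ) ≤ 2)]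
    have h3 : (2:ℝ)^(-α) * (2:ℝ)^(α-1) = 2⁻¹ := by
      rw [← Real.rpow_add two_pos, show -α+(α-1) = -1 by ring, Real.rpow_neg_one]
    have hA : 1 * ((1-δ)/2) + (2:ℝ)⁻¹^α * δ = (2:ℝ)^(-α) * B := by
      rw [h2a, hBdef]; linear_combination (δ-1) * h3
    rw [hA]
    have e3 : ((2:ℝ)^(-α) * B) ^ (1/α) = (2:ℝ)⁻¹ * B ^ (1/α) := by
      rw [Real.mul_rpow (by positivity) hB.le, ← Real.rpow_mul (by norm_num : (0:ℝ) ≤ 2),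
        show -α * (1/α) = -1 by field_simp, Real.rpow_neg_one]
    rw [e3]
    have hsum : (2:ℝ)⁻¹ * B ^ (1/α) + (2:ℝ)⁻¹ * B ^ (1/α) = B ^ (1/α) := by ring
    rw [hsum]
    have hlog : Real.logb 2 (B ^ (1/α)) = (1/α) * Real.logb 2 B := by
      rw [Real.logb, Real.logb, Real.log_rpow hB]; ring
    rw [hlog]
    field_simp
    ring
end

section
/- Maximal-cost leakage probability bound: for finite X, Y with strictly positive joint pmf and any event E ⊆ X × Y, p_{XY}(E) ≥ (min_y p_X(E_y)) · Σ_y min_x p_{Y|X=x}(y), where E_y = {x : (x,y) ∈ E}. -/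
open Real Finset Classical
noncomputable section
open scoped Classical

/-- Maximal-cost leakage probability bound: for any event `E ⊆ X × Y`,
`p_{XY}(E) ≥ (min_y p_X(E_y)) · Σ_y min_x p_{Y|X=x}(y)`, where
`E_y = {x : (x,y) ∈ E}` and `Σ_y min_x p_{Y|X=x}(y) = exp(-I_{-∞}(X,Y))`. -/
theorem probability_lower_bound_maximal_cost_leakage
    {X Y : Type*} [Fintype X] [Nonempty X] [Fintype Y] [Nonempty Y]
    (p : X × Y → ℝ) (hp : ∀ z, 0 < p z) (hp1 : ∑ z, p z = 1)
    (pX : X → ℝ) (hpX : ∀ x, pX x = ∑ y, p (x, y))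
    (E : Finset (X × Y)) :
    (∑ z ∈ E, p z)
      ≥ (Finset.univ.inf' Finset.univ_nonempty
          (fun y => ∑ x ∈ Finset.univ.filter (fun x => (x, y) ∈ E), pX x))
        * (∑ y, Finset.univ.inf' Finset.univ_nonempty
            (fun x => p (x, y) / pX x)) := by
  have hpXpos : ∀ x, 0 < pX x := fun x => by
    rw [hpX]; exact Finset.sum_pos (fun y _ => hp _) Finset.univ_nonempty
  set c := Finset.univ.inf' Finset.univ_nonempty
      (fun y => ∑ x ∈ Finset.univ.filter (fun x => (x, y) ∈ E), pX x) with hc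
  have hE : (∑ z ∈ E, p z)
      = ∑ y, ∑ x ∈ Finset.univ.filter (fun x => (x, y) ∈ E), p (x, y) := by
    rw [Finset.sum_finset_product_right E Finset.univ
      (fun y => Finset.univ.filter (fun x => (x, y) ∈ E))
      (by simp)]
  rw [ge_iff_le, hE, Finset.mul_sum]
  apply Finset.sum_le_sum
  intro y _
  set m := Finset.univ.inf' Finset.univ_nonempty (fun x => p (x, y) / pX x) with hm
  have hm0 : 0 ≤ m := Finset.le_inf' _ _ fun x _ =>
    le_of_lt (div_pos (hp _) (hpXpos x))
  calc c * m ≤ (∑ x ∈ Finset.univ.filter (fun x => (x, y) ∈ E), pX x) * m :=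
        mul_le_mul_of_nonneg_right (Finset.inf'_le _ (Finset.mem_univ y)) hm0
    _ = ∑ x ∈ Finset.univ.filter (fun x => (x, y) ∈ E), pX x * m := by
        rw [Finset.sum_mul]
    _ ≤ ∑ x ∈ Finset.univ.filter (fun x => (x, y) ∈ E), p (x, y) := by
        apply Finset.sum_le_sum
        intro x _
        have := Finset.inf'_le (fun x => p (x, y) / pX x) (Finset.mem_univ x)
        rw [mul_comm]
        exact (le_div_iff₀ (hpXpos x)).mp this
end
end

section
/- Bayesian risk lower bound via small-ball probability and maximal-cost leakage: for finite random variables W, X with strictly positive joint pmf, any estimator φ : X → Ŵ, any loss ℓ : W × Ŵ → ℝ≥0, and any ρ > 0, E[ℓ(W, φ(X))] ≥ ρ · (Σ_x min_w p_{X|W=w}(x)) · (1 - L_W(ρ)), where L_W(ρ) = max_{ŵ} P_W(ℓ(W, ŵ) ≤ ρ). -/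
open Real Finset
noncomputable section
open scoped Classical

/-- Bayesian risk lower bound via small-ball probability and maximal-cost leakage:
for any estimator `φ`, nonnegative loss `ℓ` and `ρ > 0`,
`E[ℓ(W, φ(X))] ≥ ρ · (Σ_x min_w p_{X|W=w}(x)) · (1 - L_W(ρ))`, where
`L_W(ρ) = max_wh P_W(ℓ(W,wh) ≤ ρ)`. -/
theorem bayes_risk_lower_bound_maximal_cost_leakage
    {W X What : Type*} [Fintype W] [Nonempty W] [Fintype X] [Fintype What] [Nonempty What]
    (p : W × X → ℝ) (hp : ∀ z, 0 < p z) (hp1 : ∑ z, p z = 1)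
    (pW : W → ℝ) (hpW : ∀ w, pW w = ∑ x, p (w, x))
    (φ : X → What) (ℓ : W → What → ℝ) (hℓ : ∀ w wh, 0 ≤ ℓ w wh)
    (ρ : ℝ) (hρ : 0 < ρ) :
    (∑ z : W × X, p z * ℓ z.1 (φ z.2))
      ≥ ρ * (∑ x, Finset.univ.inf' Finset.univ_nonempty
              (fun w => p (w, x) / pW w))
          * (1 - Finset.univ.sup' Finset.univ_nonempty
              (fun wh : What => ∑ w ∈ Finset.univ.filter (fun w => ℓ w wh ≤ ρ), pW w)) := by
  have hX : Nonempty X := by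
    by_contra h
    rw [not_nonempty_iff] at h
    haveI := h
    rw [Finset.univ_eq_empty, Finset.sum_empty] at hp1
    norm_num at hp1
  have hpWpos : ∀ w, 0 < pW w := fun w => by
    rw [hpW]; exact Finset.sum_pos (fun x _ => hp _) Finset.univ_nonempty
  have hsumW : ∑ w, pW w = 1 := by
    simp only [hpW]; rw [← Fintype.sum_prod_type]; exact hp1
  set m : X → ℝ := fun x => Finset.univ.inf' Finset.univ_nonempty
      (fun w => p (w, x) / pW w) with hm
  set L : ℝ := Finset.univ.sup' Finset.univ_nonempty
      (fun wh : What => ∑ w ∈ Finset.univ.filter (fun w => ℓ w wh ≤ ρ), pW w) with hL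
  have hm_nonneg : ∀ x, 0 ≤ m x := fun x =>
    Finset.le_inf' _ _ (fun w _ => div_nonneg (hp _).le (hpWpos w).le)
  have hm_le : ∀ w x, m x ≤ p (w, x) / pW w := fun w x =>
    Finset.inf'_le _ (Finset.mem_univ w)
  have hcompl : ∀ x, 1 - L ≤ ∑ w ∈ Finset.univ.filter (fun w => ¬ ℓ w (φ x) ≤ ρ), pW w := by
    intro x
    have h1 : (∑ w ∈ Finset.univ.filter (fun w => ℓ w (φ x) ≤ ρ), pW w)
        + ∑ w ∈ Finset.univ.filter (fun w => ¬ ℓ w (φ x) ≤ ρ), pW w = 1 := by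
      rw [Finset.sum_filter_add_sum_filter_not]; exact hsumW
    have h2 : (∑ w ∈ Finset.univ.filter (fun w => ℓ w (φ x) ≤ ρ), pW w) ≤ L := by
      rw [hL]
      exact Finset.le_sup' (fun wh : What => ∑ w ∈ Finset.univ.filter (fun w => ℓ w wh ≤ ρ), pW w) (Finset.mem_univ (φ x))
    linarith
  calc ρ * (∑ x, m x) * (1 - L)
      = ∑ x, ρ * m x * (1 - L) := by rw [Finset.mul_sum, Finset.sum_mul]
    _ ≤ ∑ x, ρ * m x * (∑ w ∈ Finset.univ.filter (fun w => ¬ ℓ w (φ x) ≤ ρ), pW w) := by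
        refine Finset.sum_le_sum fun x _ => ?_
        exact mul_le_mul_of_nonneg_left (hcompl x)
          (mul_nonneg hρ.le (hm_nonneg x))
    _ ≤ ∑ x, ∑ w ∈ Finset.univ.filter (fun w => ¬ ℓ w (φ x) ≤ ρ), ρ * p (w, x) := by
        refine Finset.sum_le_sum fun x _ => ?_
        rw [mul_assoc, Finset.mul_sum, Finset.mul_sum]
        refine Finset.sum_le_sum fun w _ => ?_
        refine mul_le_mul_of_nonneg_left ?_ hρ.le
        calc m x * pW w ≤ (p (w, x) / pW w) * pW w :=
              mul_le_mul_of_nonneg_right (hm_le w x) (hpWpos w).le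
          _ = p (w, x) := div_mul_cancel₀ _ (hpWpos w).ne'
    _ ≤ ∑ x, ∑ w ∈ Finset.univ.filter (fun w => ¬ ℓ w (φ x) ≤ ρ), p (w, x) * ℓ w (φ x) := by
        refine Finset.sum_le_sum fun x _ => Finset.sum_le_sum fun w hw => ?_
        have hρℓ : ρ ≤ ℓ w (φ x) := le_of_not_ge (Finset.mem_filter.mp hw).2
        calc ρ * p (w, x) ≤ ℓ w (φ x) * p (w, x) :=
              mul_le_mul_of_nonneg_right hρℓ (hp _).le
          _ = p (w, x) * ℓ w (φ x) := mul_comm _ _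
    _ ≤ ∑ x, ∑ w, p (w, x) * ℓ w (φ x) := by
        refine Finset.sum_le_sum fun x _ => ?_
        exact Finset.sum_le_sum_of_subset_of_nonneg (Finset.filter_subset _ _)
          (fun w _ _ => mul_nonneg (hp _).le (hℓ _ _))
    _ = ∑ z : W × X, p z * ℓ z.1 (φ z.2) := by
        rw [Fintype.sum_prod_type]; exact Finset.sum_comm
end
end

section
/- Gaussian example: if X ~ N(0, σ_X²) and N ~ N(0, σ_N²) are independent, then for -σ_N²/σ_X² < α < 0, the negative-order Sibson mutual information satisfies I_α(X, X+N) = -(1/2)·log(1 + α·σ_X²/σ_N²). -/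
/-!
For `α < 0` the power `gN ^ α` is, up to a constant, `exp (-α z² / (2σN²))`, a Gaussian of
negative variance. Completing the square, the constraint `ασX² + σN² > 0` is exactly what makes
its convolution with `gX` finite, and the result is again of the form `C · exp (-α y² / (2u))`
with `u = ασX² + σN²`. Raising it to the power `1/α` gives a genuine Gaussian of variance `u`,
whose integral is explicit; the logarithm of the outcome collapses to `-(1/2) log (u / σN²)`.
-/

open Real MeasureTheory

lemma integral_exp_neg_mul_sq_sub_mul_exp_neg_mul_sq {a b : ℝ} (hab : a + b ≠ 0) (y : ℝ) :
    ∫ x, exp (-a * (y - x) ^ 2) * exp (-b * x ^ 2)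
      = sqrt (π / (a + b)) * exp (-(a * b / (a + b)) * y ^ 2) := by
  have complete_square : ∀ x, exp (-a * (y - x) ^ 2) * exp (-b * x ^ 2)
      = exp (-(a * b / (a + b)) * y ^ 2) * exp (-(a + b) * (x - a / (a + b) * y) ^ 2) := by
    intro x
    rw [← exp_add, ← exp_add]
    congr 1
    field_simp
    ring
  simp_rw [complete_square]
  rw [integral_const_mul, integral_sub_right_eq_self (fun x ↦ exp (-(a + b) * x ^ 2)),
    integral_gaussian, mul_comm]

lemma integral_rpow_const_mul_exp_neg_mul_sq {C c p : ℝ} (hC : 0 < C) :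
    ∫ y, (C * exp (-c * y ^ 2)) ^ p = C ^ p * sqrt (π / (c * p)) := by
  have hpow : ∀ y, (C * exp (-c * y ^ 2)) ^ p = C ^ p * exp (-(c * p) * y ^ 2) := by
    intro y
    rw [mul_rpow hC.le (exp_pos _).le, ← exp_mul]
    ring_nf
  simp_rw [hpow]
  rw [integral_const_mul, integral_gaussian]

noncomputable def gaussianDensity (v x : ℝ) : ℝ :=
  1 / sqrt (2 * π * v) * exp (-(x ^ 2) / (2 * v))

lemma gaussianDensity_rpow {v : ℝ} (hv : 0 < v) (p x : ℝ) :
    gaussianDensity v x ^ p = (2 * π * v) ^ (-p / 2) * exp (-(p / (2 * v)) * x ^ 2) := by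
  have hv2π : 0 < 2 * π * v := by positivity
  rw [gaussianDensity, mul_rpow (by positivity) (exp_pos _).le, ← exp_mul, one_div,
    sqrt_eq_rpow, ← rpow_neg hv2π.le, ← rpow_mul hv2π.le]
  congr 2 <;> ring

lemma integral_gaussianDensity_rpow_mul_gaussianDensity {s t α : ℝ} (hs : 0 < s) (ht : 0 < t)
    (hu : 0 < α * s + t) (y : ℝ) :
    ∫ x, gaussianDensity t (y - x) ^ α * gaussianDensity s x
      = (2 * π * t) ^ (-α / 2) * sqrt (t / (α * s + t))
        * exp (-(α / (2 * (α * s + t))) * y ^ 2) := by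
  have hab : 0 < α / (2 * t) + 1 / (2 * s) := by
    have : α / (2 * t) + 1 / (2 * s) = (α * s + t) / (2 * s * t) := by
      field_simp
    rw [this]
    positivity
  have factor : ∀ x, gaussianDensity t (y - x) ^ α * gaussianDensity s x
      = ((2 * π * t) ^ (-α / 2) * (2 * π * s) ^ (-1 / 2 : ℝ))
        * (exp (-(α / (2 * t)) * (y - x) ^ 2) * exp (-(1 / (2 * s)) * x ^ 2)) := by
    intro x
    rw [gaussianDensity_rpow ht, ← rpow_one (gaussianDensity s x), gaussianDensity_rpow hs]
    ring
  simp_rw [factor]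
  rw [integral_const_mul, integral_exp_neg_mul_sq_sub_mul_exp_neg_mul_sq hab.ne']
  have hsum : π / (α / (2 * t) + 1 / (2 * s)) = (2 * π * s) * (t / (α * s + t)) := by
    field_simp
  have hprod : α / (2 * t) * (1 / (2 * s)) / (α / (2 * t) + 1 / (2 * s))
      = α / (2 * (α * s + t)) := by
    field_simp
  have hcancel : (2 * π * s) ^ (-1 / 2 : ℝ) * sqrt (2 * π * s) = 1 := by
    rw [sqrt_eq_rpow, ← rpow_add (by positivity)]
    norm_num
  rw [hsum, hprod, sqrt_mul (by positivity)]
  linear_combination (2 * π * t) ^ (-α / 2) * sqrt (t / (α * s + t))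
    * exp (-(α / (2 * (α * s + t))) * y ^ 2) * hcancel

/-- Gaussian example: if `X ~ N(0, σ_X²)` and `N ~ N(0, σ_N²)` are independent
and `Y = X + N`, then for `-σ_N²/σ_X² < α < 0`,
`I_α(X, X+N) = -(1/2)·log(1 + α·σ_X²/σ_N²)`, where
`I_α(X,Y) = (α/(1-α)) · log ∫ (∫ p_{Y|X=x}(y)^α p_X(x) dx)^{1/α} dy`. -/
theorem sibson_neg_order_gaussian
    (σX σN : ℝ) (hσX : 0 < σX) (hσN : 0 < σN)
    (α : ℝ) (hα0 : α < 0) (hαlb : -(σN ^ 2 / σX ^ 2) < α)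
    (gX gN : ℝ → ℝ)
    (hgX : ∀ x, gX x = (1 / Real.sqrt (2 * Real.pi * σX ^ 2)) *
      Real.exp (-(x ^ 2) / (2 * σX ^ 2)))
    (hgN : ∀ x, gN x = (1 / Real.sqrt (2 * Real.pi * σN ^ 2)) *
      Real.exp (-(x ^ 2) / (2 * σN ^ 2))) :
    (α / (1 - α)) *
        Real.log (∫ y : ℝ, (∫ x : ℝ, gN (y - x) ^ α * gX x) ^ (1 / α))
      = -(1 / 2) * Real.log (1 + α * σX ^ 2 / σN ^ 2) := by
  obtain rfl : gX = gaussianDensity (σX ^ 2) := funext hgX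
  obtain rfl : gN = gaussianDensity (σN ^ 2) := funext hgN
  set s := σX ^ 2
  set t := σN ^ 2
  have hs : 0 < s := by positivity
  have ht : 0 < t := by positivity
  have hu : 0 < α * s + t := by
    have := mul_lt_mul_of_pos_right hαlb hs
    rw [neg_mul, div_mul_cancel₀ _ hs.ne'] at this
    linarith
  have hK : 0 < (2 * π * t) ^ (-α / 2) * sqrt (t / (α * s + t)) := by positivity
  simp_rw [integral_gaussianDensity_rpow_mul_gaussianDensity hs ht hu,
    integral_rpow_const_mul_exp_neg_mul_sq hK]
  have hα : α ≠ 0 := hα0.ne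
  have h1α : 1 - α ≠ 0 := by linarith
  have hratio : 1 + α * s / t = (α * s + t) / t := by
    field_simp
    ring
  have hvar : π / (α / (2 * (α * s + t)) * (1 / α)) = 2 * π * (α * s + t) := by
    field_simp
  rw [hratio, hvar, log_mul (rpow_pos_of_pos hK _).ne' (by positivity), log_rpow hK,
    log_mul (by positivity) (by positivity), log_rpow (by positivity), log_sqrt (by positivity),
    log_sqrt (by positivity), log_div hu.ne' ht.ne', log_div ht.ne' hu.ne',
    log_mul (by positivity) ht.ne', log_mul (by positivity) hu.ne']
  field_simp
  ring
end
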